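/- Let L be a positive definite integral lattice of rank n+1 primitively representing A_n (i.e., containing a primitive sublattice isometric to A_n). Then L is isometric to (A_n ⊥ ℤz) + ℤ([i] + z/(n+1)) for some i with 0 ≤ i ≤ ⌊(n+1)/2⌋ and some vector z orthogonal to A_n with Q(z) = k(n+1) where k ≡ i² (mod n+1), k > 0. -/

import Mathlib

open Matrix

/-- Square integer matrices of size `n`, used as Gram matrices of lattices. -/
abbrev Mat (n : ℕ) := Matrix (Fin n) (Fin n) ℤ

/-- `G` is the Gram matrix of a positive definite integral lattice:
it is symmetric and `vᵀ G v > 0` for every nonzero integer vector `v`. -/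
def PosDefInt {n : ℕ} (G : Mat n) : Prop :=
  G.IsSymm ∧ ∀ v : Fin n → ℤ, v ≠ 0 → 0 < v ⬝ᵥ G.mulVec v

/-- The lattice with Gram matrix `L` represents the lattice with Gram matrix `N`:
there is an integral matrix `T` (whose rows are the coordinates of the images of
the basis vectors) with `T L Tᵀ = N`. -/
def Represents {m n : ℕ} (L : Mat m) (N : Mat n) : Prop :=
  ∃ T : Matrix (Fin n) (Fin m) ℤ, T * L * T.transpose = N

/-- Isometry of (positive definite) lattices, expressed as mutual representation. -/
def Isom {m n : ℕ} (A : Mat m) (B : Mat n) : Prop :=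
  Represents A B ∧ Represents B A

theorem Represents.rfl' {n : ℕ} (A : Mat n) : Represents A A :=
  ⟨1, by simp⟩

theorem Represents.trans' {a b c : ℕ} {A : Mat a} {B : Mat b} {C : Mat c}
    (h1 : Represents A B) (h2 : Represents B C) : Represents A C := by
  obtain ⟨T1, h1⟩ := h1
  obtain ⟨T2, h2⟩ := h2
  refine ⟨T2 * T1, ?_⟩
  rw [← h2, ← h1]
  simp [Matrix.mul_assoc, Matrix.transpose_mul]

/-- A positive definite integral lattice of rank `n`, given by a Gram matrix. -/
def QLat (n : ℕ) := {G : Mat n // PosDefInt G}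

instance latSetoid (n : ℕ) : Setoid (QLat n) where
  r A B := Isom A.1 B.1
  iseqv := ⟨fun A => ⟨Represents.rfl' _, Represents.rfl' _⟩,
    fun h => ⟨h.2, h.1⟩,
    fun h1 h2 => ⟨h1.1.trans' h2.1, h2.2.trans' h1.2⟩⟩

/-- Isometry classes of positive definite integral lattices of rank `n` (`Φ_n`). -/
def Cls (n : ℕ) := Quotient (latSetoid n)

/-- The isometry class of a lattice. -/
def cls {n : ℕ} (L : QLat n) : Cls n := Quotient.mk _ L

/-- A lattice represents an isometry class. -/
def RepCls {m n : ℕ} (L : QLat m) (c : Cls n) : Prop :=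
  ∃ N : QLat n, cls N = c ∧ Represents L.1 N.1

/-- The `n`-exceptional set of `L`: the classes of rank-`n` positive definite
integral lattices not represented by `L`. -/
def ExcSet (n : ℕ) {m : ℕ} (L : QLat m) : Set (Cls n) :=
  {c : Cls n | ¬ RepCls L c}
/-- Gram matrix of the root lattice `A_n` with respect to the simple roots
`α_j = e_{j-1} - e_j`. -/
def Agram (n : ℕ) : Mat n :=
  Matrix.of fun i j =>
    if i = j then 2
    else if (i : ℕ) + 1 = (j : ℕ) ∨ (j : ℕ) + 1 = (i : ℕ) then -1
    else 0

/-- Gram matrix of the lattice `(A_n ⊥ ℤz) + ℤ([i] + z/(n+1))`, where `Q(z) = k(n+1)`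
and `q = (i(n+1-i) + k)/(n+1)` is the norm of the glued vector `[i] + z/(n+1)`:
the Cartan matrix of `A_n` bordered by the row/column `B(α_j, [i]) = δ_{j, n+1-i}`
with corner entry `q`. -/
def AGlue (n i : ℕ) (q : ℤ) : Mat (n + 1) :=
  Matrix.of fun r c =>
    if hr : (r : ℕ) < n then
      if hc : (c : ℕ) < n then Agram n ⟨r, hr⟩ ⟨c, hc⟩
      else if (r : ℕ) = n - i then 1 else 0
    else
      if hc : (c : ℕ) < n then (if (c : ℕ) = n - i then 1 else 0)
      else q

/-- `L` primitively represents `N`: there is a representation whose image is a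
primitive sublattice (equivalently, the coordinate matrix `T` has an integral
right inverse). -/
def PrimRep {m n : ℕ} (L : Mat m) (N : Mat n) : Prop :=
  ∃ T : Matrix (Fin n) (Fin m) ℤ,
    T * L * T.transpose = N ∧ ∃ S : Matrix (Fin m) (Fin n) ℤ, T * S = 1


/-!
Extend the primitive copy of `A_n` to a basis `α_1, …, α_n, e` of `L`; the Gram matrix is then
the Cartan matrix `A` bordered by `b = (B(α_j, e))_j`. Replacing `e` by `±e + ∑ c_j α_j` turns
`b` into `A c ± b`. The image of `A` is the kernel of `d ↦ ∑ j d_j mod (n + 1)`, the map to the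
discriminant group `ℤ/(n+1)` of `A_n`, so `b` can be moved to the border `δ_{j, n+1-i}` of a glue
vector `[i]` with `i ≤ (n + 1)/2`. With `q = Q(e)`, the vector `z = (n + 1)(e - [i])` lies in `L`,
is orthogonal to `A_n` and has norm `(n + 1)((n + 1) q - i (n + 1 - i)) = (n + 1) k > 0`;
reducing mod `n + 1` gives `k ≡ i²`.
-/

section Bordered

variable {α R : Type*} [CommRing R] {m n : ℕ}

def appendRow (A : Matrix (Fin n) (Fin m) α) (v : Fin m → α) :
    Matrix (Fin (n + 1)) (Fin m) α :=
  Matrix.of (Fin.snoc A v)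

@[simp]
lemma appendRow_castSucc (A : Matrix (Fin n) (Fin m) α) (v : Fin m → α) (i : Fin n) :
    appendRow A v i.castSucc = A i :=
  Fin.snoc_castSucc (α := fun _ => Fin m → α) ..

@[simp]
lemma appendRow_last (A : Matrix (Fin n) (Fin m) α) (v : Fin m → α) :
    appendRow A v (Fin.last n) = v :=
  Fin.snoc_last (α := fun _ => Fin m → α) ..

def bordered (A : Matrix (Fin n) (Fin n) α) (b : Fin n → α) (d : α) :
    Matrix (Fin (n + 1)) (Fin (n + 1)) α :=
  appendRow (Matrix.of fun r => Fin.snoc (A r) (b r)) (Fin.snoc b d)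

section
variable (A : Matrix (Fin n) (Fin n) α) (b : Fin n → α) (d : α) (r s : Fin n)

@[simp] lemma bordered_castSucc_castSucc : bordered A b d r.castSucc s.castSucc = A r s := by
  simp [bordered]

@[simp] lemma bordered_castSucc_last : bordered A b d r.castSucc (Fin.last n) = b r := by
  simp [bordered]

@[simp] lemma bordered_last_castSucc : bordered A b d (Fin.last n) s.castSucc = b s := by
  simp [bordered]

@[simp] lemma bordered_last_last : bordered A b d (Fin.last n) (Fin.last n) = d := by
  simp [bordered]

end

lemma bordered_isSymm {A : Matrix (Fin n) (Fin n) α} (hA : A.IsSymm) (b : Fin n → α) (d : α) :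
    (bordered A b d).IsSymm := by
  ext r s
  induction r using Fin.lastCases <;> induction s using Fin.lastCases <;>
    simp [hA.apply]

lemma snoc_dotProduct_snoc (x y : Fin n → R) (s t : R) :
    (Fin.snoc x s : Fin (n + 1) → R) ⬝ᵥ Fin.snoc y t = x ⬝ᵥ y + s * t := by
  simp [dotProduct, Fin.sum_univ_castSucc]

lemma bordered_mulVec_snoc (A : Matrix (Fin n) (Fin n) R) (b x : Fin n → R) (d t : R) :
    bordered A b d *ᵥ Fin.snoc x t = Fin.snoc (A *ᵥ x + t • b) (b ⬝ᵥ x + t * d) := by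
  ext r
  induction r using Fin.lastCases <;>
    simp [mulVec, dotProduct, Fin.sum_univ_castSucc, mul_comm]

lemma mul_mul_transpose_apply {k : Type*} [Fintype k] (P : Matrix (Fin n) k R) (X : Matrix k k R)
    (r s : Fin n) : (P * X * Pᵀ) r s = P r ⬝ᵥ X *ᵥ P s := by
  rw [Matrix.mul_assoc, mul_apply]
  simp only [mul_apply, transpose_apply, dotProduct, mulVec, Finset.mul_sum]

lemma appendRow_mul_mul_transpose {X : Matrix (Fin m) (Fin m) R} (hX : X.IsSymm)
    (A : Matrix (Fin n) (Fin m) R) (v : Fin m → R) :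
    appendRow A v * X * (appendRow A v)ᵀ = bordered (A * X * Aᵀ) (A *ᵥ X *ᵥ v) (v ⬝ᵥ X *ᵥ v) := by
  have hcomm : ∀ w : Fin m → R, v ⬝ᵥ X *ᵥ w = w ⬝ᵥ X *ᵥ v := fun w => by
    rw [dotProduct_mulVec, ← mulVec_transpose, hX.eq, dotProduct_comm]
  ext r s
  rw [mul_mul_transpose_apply]
  induction r using Fin.lastCases <;> induction s using Fin.lastCases <;>
    simp only [appendRow_castSucc, appendRow_last, bordered_castSucc_castSucc,
      bordered_castSucc_last, bordered_last_castSucc, bordered_last_last, hcomm]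
  all_goals first | rfl | exact (mul_mul_transpose_apply ..).symm

def shear (c : Fin n → R) (t : R) : Matrix (Fin (n + 1)) (Fin (n + 1)) R :=
  appendRow (Matrix.of fun r => Pi.single r.castSucc 1) (Fin.snoc c t)

lemma det_shear (c : Fin n → R) (t : R) : (shear c t).det = t := by
  rw [det_of_isLowerTriangular]
  · simp [shear, Fin.prod_univ_castSucc]
  · intro i j hij
    induction i using Fin.lastCases with
    | last => exact absurd hij (not_lt.2 (Fin.le_last j))
    | cast r =>
      have hj : j ≠ r.castSucc := (OrderDual.toDual_lt_toDual.1 hij).ne'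
      simp [shear, hj]

lemma shear_mul_bordered_mul_transpose {A : Matrix (Fin n) (Fin n) R} (hA : A.IsSymm)
    (b c : Fin n → R) (d t : R) :
    shear c t * bordered A b d * (shear c t)ᵀ = bordered A (A *ᵥ c + t • b)
      (Fin.snoc c t ⬝ᵥ bordered A b d *ᵥ Fin.snoc c t) := by
  have hrows : ∀ w : Fin (n + 1) → R,
      (Matrix.of fun r : Fin n => (Pi.single r.castSucc 1 : Fin (n + 1) → R)) *ᵥ w =
        fun r => w r.castSucc := fun w => by
    ext r; exact single_one_dotProduct _ _
  rw [shear, appendRow_mul_mul_transpose (bordered_isSymm hA b d)]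
  congr 1
  · ext r s
    rw [mul_mul_transpose_apply]
    change Pi.single _ 1 ⬝ᵥ _ *ᵥ Pi.single _ 1 = _
    simp
  · rw [bordered_mulVec_snoc]
    exact (hrows _).trans (funext fun r => by simp)

end Bordered

section Gram

variable {m : ℕ} {M : Mat m}

lemma PosDefInt.mul_mul_transpose {G : Mat m} (hG : PosDefInt G) (hM : IsUnit M.det) :
    PosDefInt (M * G * Mᵀ) := by
  refine ⟨by simp [IsSymm, transpose_mul, hG.1.eq, Matrix.mul_assoc], fun v hv => ?_⟩
  have hMv : Mᵀ *ᵥ v ≠ 0 := fun h0 => hv <| by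
    rw [← Matrix.one_mulVec v, ← nonsing_inv_mul Mᵀ (by rwa [det_transpose]), ← mulVec_mulVec,
      h0, mulVec_zero]
  have hquad : v ⬝ᵥ (M * G * Mᵀ) *ᵥ v = (Mᵀ *ᵥ v) ⬝ᵥ G *ᵥ (Mᵀ *ᵥ v) := by
    rw [← mulVec_mulVec, ← mulVec_mulVec, dotProduct_mulVec, ← mulVec_transpose]
  exact hquad ▸ hG.2 _ hMv

lemma isom_mul_mul_transpose (G : Mat m) (hM : IsUnit M.det) : Isom G (M * G * Mᵀ) := by
  refine ⟨⟨M, rfl⟩, ⟨M⁻¹, ?_⟩⟩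
  calc M⁻¹ * (M * G * Mᵀ) * M⁻¹ᵀ = M⁻¹ * M * G * (Mᵀ * Mᵀ⁻¹) := by
        simp only [transpose_nonsing_inv, Matrix.mul_assoc]
    _ = G := by
        rw [nonsing_inv_mul _ hM, mul_nonsing_inv _ (by rwa [det_transpose]), Matrix.one_mul,
          Matrix.mul_one]

end Gram

section PrimitiveRows

variable {n : ℕ} {T : Matrix (Fin n) (Fin (n + 1)) ℤ} {S : Matrix (Fin (n + 1)) (Fin n) ℤ}

lemma exists_generator_ker_mulVec (hTS : T * S = 1) :
    ∃ u : Fin (n + 1) → ℤ, ∀ x, T *ᵥ x = 0 → ∃ a : ℤ, x = a • u := by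
  have hsurj : Function.Surjective T.mulVecLin := fun y =>
    ⟨S *ᵥ y, by simp [mulVec_mulVec, hTS]⟩
  have hrank : Module.finrank ℤ (LinearMap.ker T.mulVecLin) = 1 := by
    have := (LinearMap.ker T.mulVecLin).finrank_quotient_add_finrank
    rw [(T.mulVecLin.quotKerEquivOfSurjective hsurj).finrank_eq] at this
    simp at this
    omega
  let b := Module.finBasisOfFinrankEq ℤ _ hrank
  refine ⟨b 0, fun x hx => ⟨b.repr ⟨x, hx⟩ 0, ?_⟩⟩
  simpa using congrArg Subtype.val (b.sum_repr ⟨x, hx⟩).symm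

lemma exists_isUnit_det_appendRow (hTS : T * S = 1) :
    ∃ a : Fin (n + 1) → ℤ, IsUnit (appendRow T a).det := by
  obtain ⟨u, hu⟩ := exists_generator_ker_mulVec hTS
  choose a ha using fun j => hu (Pi.single j 1 - S *ᵥ T *ᵥ Pi.single j 1) (by
    rw [mulVec_sub, mulVec_mulVec, mulVec_mulVec, hTS, Matrix.one_mul, sub_self])
  refine ⟨a, isUnit_det_of_left_inverse (B := (appendRow Sᵀ u)ᵀ) ?_⟩
  ext r j
  have hj := congrFun (ha j) r
  simp [mulVec, dotProduct, mul_apply, Fin.sum_univ_castSucc, Pi.single_apply, one_apply] at hj ⊢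
  linear_combination -hj

end PrimitiveRows

section Cartan

variable {n i : ℕ}

lemma Agram_isSymm : (Agram n).IsSymm := by
  ext r s
  simp only [transpose_apply, Agram, of_apply, eq_comm, or_comm]

lemma Agram_mulVec_apply (g : ℕ → ℤ) (h0 : g 0 = 0) (hn : g (n + 1) = 0) (r : Fin n) :
    (Agram n *ᵥ fun c => g (c + 1)) r = 2 * g (r + 1) - g r - g (r + 2) := by
  set H : ℕ → ℤ := fun t => 2 * (if t = r + 1 then g t else 0) - (if t = r then g t else 0) -
    (if t = r + 2 then g t else 0) with hH
  have hterm (c : Fin n) : Agram n r c * g (c + 1) = H (c + 1) := by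
    simp only [Agram, of_apply, hH, Fin.ext_iff]
    split_ifs <;> omega
  calc (Agram n *ᵥ fun c => g (c + 1)) r = ∑ c ∈ Finset.range n, H (c + 1) := by
        simp only [mulVec, dotProduct, hterm]
        exact Fin.sum_univ_eq_sum_range (fun c => H (c + 1)) n
    _ = ∑ t ∈ Finset.range (n + 2), H t := by
        rw [Finset.sum_range_succ, Finset.sum_range_succ']
        simp [hH, h0, hn]
    _ = 2 * g (r + 1) - g r - g (r + 2) := by
        have hr : ¬ n + 2 ≤ r := by omega
        simp [hH, Finset.sum_sub_distrib, Finset.sum_ite_eq', hr]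

/-- `(n + 1) • (Agram n)⁻¹`: with 1-based indices its entries are
`min(j, k) * (n + 1 - max(j, k))`. -/
def cartanAdj (n : ℕ) : Mat n :=
  Matrix.of fun j k => (n + 1 : ℤ) * min ((j : ℤ) + 1) ((k : ℤ) + 1) - ((j : ℤ) + 1) * ((k : ℤ) + 1)

lemma Agram_mul_cartanAdj : Agram n * cartanAdj n = ((n : ℤ) + 1) • (1 : Mat n) := by
  ext r k
  set g : ℕ → ℤ := fun t => (n + 1 : ℤ) * min (t : ℤ) ((k : ℤ) + 1) - t * ((k : ℤ) + 1) with hg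
  have hcol : (Agram n * cartanAdj n) r k = (Agram n *ᵥ fun c => g (c + 1)) r := by
    simp [mul_apply, mulVec, dotProduct, cartanAdj, hg]
  have hmin : 2 * min ((r : ℤ) + 1) ((k : ℤ) + 1) - min (r : ℤ) ((k : ℤ) + 1) -
      min ((r : ℤ) + 2) ((k : ℤ) + 1) = if r = k then 1 else 0 := by
    split_ifs with h <;> simp only [Fin.ext_iff] at h <;> omega
  rw [hcol, Agram_mulVec_apply g (by simp [hg]; omega) (by simp [hg, k.isLt.le]) r]
  simp only [hg, Matrix.smul_apply, one_apply, smul_eq_mul]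
  push_cast
  linear_combination ((n : ℤ) + 1) * hmin

lemma exists_Agram_mulVec_eq (d : Fin n → ℤ)
    (hd : (((fun k : Fin n => (k : ℤ) + 1) ⬝ᵥ d : ℤ) : ZMod (n + 1)) = 0) :
    ∃ c, Agram n *ᵥ c = d := by
  obtain ⟨m, hm⟩ := (ZMod.intCast_zmod_eq_zero_iff_dvd _ _).1 hd
  push_cast at hm
  set c : Fin n → ℤ := fun j =>
    ∑ k : Fin n, min ((j : ℤ) + 1) ((k : ℤ) + 1) * d k - ((j : ℤ) + 1) * m
  have hadj : cartanAdj n *ᵥ d = ((n : ℤ) + 1) • c := by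
    ext j
    have hw : ∑ k : Fin n, ((j : ℤ) + 1) * ((k : ℤ) + 1) * d k = ((j : ℤ) + 1) * ((n + 1) * m) := by
      simp only [← hm, dotProduct, Finset.mul_sum, mul_assoc]
    simp only [mulVec, dotProduct, cartanAdj, of_apply, sub_mul, Finset.sum_sub_distrib, hw]
    simp only [c, Pi.smul_apply, smul_eq_mul, mul_sub, Finset.mul_sum, mul_assoc]
    ring
  refine ⟨c, smul_right_injective _ (show (n : ℤ) + 1 ≠ 0 by positivity) ?_⟩
  simp only [← mulVec_smul, ← hadj, mulVec_mulVec, Agram_mul_cartanAdj, smul_mulVec, one_mulVec]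

def glueVec (n i : ℕ) : Fin n → ℤ := fun r => if (r : ℕ) = n - i then 1 else 0

lemma glueVec_zero : glueVec n 0 = 0 := by
  ext r
  simp [glueVec, r.isLt.ne]

lemma glueVec_eq_single (h0 : 0 < i) (hi : i ≤ n) :
    glueVec n i = Pi.single ⟨n - i, by omega⟩ 1 := by
  ext r
  simp [glueVec, Pi.single_apply, Fin.ext_iff]

lemma weight_glueVec (hi : i ≤ n) :
    (((fun k : Fin n => (k : ℤ) + 1) ⬝ᵥ glueVec n i : ℤ) : ZMod (n + 1)) = -i := by
  rcases i.eq_zero_or_pos with rfl | h0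
  · simp [glueVec_zero]
  rw [glueVec_eq_single h0 hi, dotProduct_single_one]
  push_cast [Nat.cast_sub hi]
  linear_combination ZMod.natCast_self' n

lemma glueVec_dotProduct_cartanAdj_mulVec (hi : i ≤ n) :
    glueVec n i ⬝ᵥ cartanAdj n *ᵥ glueVec n i = i * ((n : ℤ) + 1 - i) := by
  rcases i.eq_zero_or_pos with rfl | h0
  · simp [glueVec_zero]
  rw [glueVec_eq_single h0 hi, mulVec_single_one, single_one_dotProduct]
  simp only [col_apply, cartanAdj, of_apply, min_self]
  push_cast [Nat.cast_sub hi]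
  ring

lemma exists_Agram_mulVec_add_smul_eq_glueVec (b : Fin n → ℤ) :
    ∃ i ≤ (n + 1) / 2, ∃ t : ℤ, IsUnit t ∧ ∃ c, Agram n *ᵥ c + t • b = glueVec n i := by
  set B : ZMod (n + 1) := Int.cast ((fun k : Fin n => (k : ℤ) + 1) ⬝ᵥ b)
  obtain ⟨t, ht, hty⟩ : ∃ t : ℤ, IsUnit t ∧ t * B.valMinAbs = -B.valMinAbs.natAbs := by
    rcases Int.natAbs_eq B.valMinAbs with h | h
    exacts [⟨-1, isUnit_one.neg, by linarith⟩, ⟨1, isUnit_one, by linarith⟩]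
  have hi : B.valMinAbs.natAbs ≤ (n + 1) / 2 := ZMod.natAbs_valMinAbs_le B
  refine ⟨_, hi, t, ht, ?_⟩
  obtain ⟨c, hc⟩ := exists_Agram_mulVec_eq (glueVec n B.valMinAbs.natAbs - t • b) <| by
    have hB := congrArg (Int.cast : ℤ → ZMod (n + 1)) hty
    simp only [Int.cast_mul, Int.cast_neg, Int.cast_natCast, ZMod.coe_valMinAbs] at hB
    rw [dotProduct_sub, dotProduct_smul, Int.cast_sub, weight_glueVec (by omega), smul_eq_mul,
      Int.cast_mul]
    linear_combination -hB
  exact ⟨c, by rw [hc, sub_add_cancel]⟩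

end Cartan

lemma AGlue_eq_bordered (n i : ℕ) (q : ℤ) : AGlue n i q = bordered (Agram n) (glueVec n i) q := by
  ext r s
  induction r using Fin.lastCases <;> induction s using Fin.lastCases <;> simp [AGlue, glueVec]

/-- Evaluate the form at `(-w, t)`. For invertible `A` this says that the Schur complement
`d - bᵀ A⁻¹ b` is positive. -/
lemma PosDefInt.bordered_schur_pos {n : ℕ} {A : Mat n} {b w : Fin n → ℤ} {d t : ℤ}
    (hG : PosDefInt (bordered A b d)) (hw : A *ᵥ w = t • b) (ht : t ≠ 0) :
    0 < t * (t * d - b ⬝ᵥ w) := by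
  have hv : (Fin.snoc (-w) t : Fin (n + 1) → ℤ) ≠ 0 := fun h => ht <| by
    simpa using congrFun h (Fin.last n)
  have := hG.2 _ hv
  rw [bordered_mulVec_snoc, mulVec_neg, hw, neg_add_cancel, snoc_dotProduct_snoc, dotProduct_zero,
    dotProduct_neg] at this
  linarith

lemma PosDefInt.glue_norm_lt {n i : ℕ} {q : ℤ} (hG : PosDefInt (AGlue n i q)) (hi : i ≤ n) :
    (i : ℤ) * ((n : ℤ) + 1 - i) < ((n : ℤ) + 1) * q := by
  rw [AGlue_eq_bordered] at hG
  have hw : Agram n *ᵥ (cartanAdj n *ᵥ glueVec n i) = ((n : ℤ) + 1) • glueVec n i := by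
    rw [mulVec_mulVec, Agram_mul_cartanAdj, smul_mulVec, one_mulVec]
  have := hG.bordered_schur_pos hw (by positivity)
  rw [glueVec_dotProduct_cartanAdj_mulVec hi] at this
  linarith [(pos_iff_pos_of_mul_pos this).1 (by positivity)]

lemma exists_isUnit_det_mul_mul_transpose_eq_AGlue {n : ℕ} {L : Mat (n + 1)} (hL : L.IsSymm)
    (h : PrimRep L (Agram n)) :
    ∃ i ≤ (n + 1) / 2, ∃ (q : ℤ) (M : Mat (n + 1)), IsUnit M.det ∧ M * L * Mᵀ = AGlue n i q := by
  obtain ⟨T, hT, S, hTS⟩ := h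
  obtain ⟨a, ha⟩ := exists_isUnit_det_appendRow hTS
  obtain ⟨i, hi, t, ht, c, hc⟩ := exists_Agram_mulVec_add_smul_eq_glueVec (T *ᵥ L *ᵥ a)
  refine ⟨i, hi, Fin.snoc c t ⬝ᵥ bordered (Agram n) (T *ᵥ L *ᵥ a) (a ⬝ᵥ L *ᵥ a) *ᵥ Fin.snoc c t,
    shear c t * appendRow T a, ?_, ?_⟩
  · rw [det_mul, det_shear]
    exact ht.mul ha
  calc shear c t * appendRow T a * L * (shear c t * appendRow T a)ᵀ
      = shear c t * (appendRow T a * L * (appendRow T a)ᵀ) * (shear c t)ᵀ := by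
        simp only [transpose_mul, Matrix.mul_assoc]
    _ = shear c t * bordered (Agram n) (T *ᵥ L *ᵥ a) (a ⬝ᵥ L *ᵥ a) * (shear c t)ᵀ := by
        rw [appendRow_mul_mul_transpose hL, hT]
    _ = AGlue n i _ := by
        rw [shear_mul_bordered_mul_transpose Agram_isSymm, hc, AGlue_eq_bordered]

theorem primrep_An_classification_general (n : ℕ) (L : QLat (n + 1))
    (h : PrimRep L.1 (Agram n)) :
    ∃ (i k : ℕ) (q : ℤ), i ≤ (n + 1) / 2 ∧ 0 < k ∧
      (k : ZMod (n + 1)) = (i : ZMod (n + 1)) ^ 2 ∧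
      ((n : ℤ) + 1) * q = (i : ℤ) * ((n : ℤ) + 1 - (i : ℤ)) + (k : ℤ) ∧
      Isom L.1 (AGlue n i q) := by
  obtain ⟨i, hi, q, M, hM, hML⟩ := exists_isUnit_det_mul_mul_transpose_eq_AGlue L.2.1 h
  have hlt := (hML ▸ L.2.mul_mul_transpose hM : PosDefInt (AGlue n i q)).glue_norm_lt (by omega)
  obtain ⟨k, hk⟩ := Int.eq_ofNat_of_zero_le (sub_nonneg.2 hlt.le)
  have hkq := congrArg (Int.cast : ℤ → ZMod (n + 1)) hk
  push_cast at hkq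
  refine ⟨i, k, q, hi, by omega, ?_, by linarith, hML ▸ isom_mul_mul_transpose L.1 hM⟩
  linear_combination (q - i : ZMod (n + 1)) * ZMod.natCast_self' n - hkq

/-- Any positive definite integral lattice `L` of rank `n+1` which
primitively represents `A_n` is isometric to `(A_n ⊥ ℤz) + ℤ([i] + z/(n+1))` for
some `0 ≤ i ≤ ⌊(n+1)/2⌋` and some `z ⊥ A_n` with `Q(z) = k(n+1)`, `k > 0`,
`k ≡ i² (mod n+1)`.  (The Gram matrix of that lattice is `AGlue n i q` where
`(n+1)q = i(n+1-i) + k`.) -/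
theorem primrep_An_classification (n : ℕ) (hn : 0 < n) (L : QLat (n + 1))
    (h : PrimRep L.1 (Agram n)) :
    ∃ (i k : ℕ) (q : ℤ), i ≤ (n + 1) / 2 ∧ 0 < k ∧
      (k : ZMod (n + 1)) = (i : ZMod (n + 1)) ^ 2 ∧
      ((n : ℤ) + 1) * q = (i : ℤ) * ((n : ℤ) + 1 - (i : ℤ)) + (k : ℤ) ∧
      Isom L.1 (AGlue n i q) :=
  primrep_An_classification_general n L h
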